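/- Let $M \subset \mathbb{R}^3$ be a compact set with distance function $r$ comparable to the Euclidean distance. There exists a constant $C > 0$ depending only on $M$ such that for all $x, z \in M$ with $x \ne z$: $\int_M \frac{1}{r(x,y)}\,\frac{1}{r(y,z)}\,dy \le \frac{C}{r(x,z)}$. -/

import Mathlib

open MeasureTheory Metric ENNReal

local notation "E3" => EuclideanSpace ℝ (Fin 3)

lemma key_lintegral (c : E3) {ρ : ℝ} (hρ : 0 < ρ) :
    ∫⁻ y in closedBall c ρ, ENNReal.ofReal ((dist c y)⁻¹) ^ 2 ≤
      ENNReal.ofReal (8 * ρ) * volume (ball (0 : E3) 1) := by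
  set V := volume (ball (0 : E3) 1) with hV
  set A : ℕ → Set E3 := fun n => closedBall c (ρ * 2⁻¹ ^ n) \ closedBall c (ρ * 2⁻¹ ^ (n + 1))
    with hA
  have hcover : closedBall c ρ ⊆ {c} ∪ ⋃ n, A n := by
    intro y hy
    rcases eq_or_ne y c with rfl | hyc
    · exact Set.mem_union_left _ rfl
    have hd : 0 < dist y c := dist_pos.2 hyc
    have hP : ∃ n : ℕ, ρ * 2⁻¹ ^ (n + 1) < dist y c := by
      obtain ⟨m, hm⟩ := exists_pow_lt_of_lt_one (div_pos hd hρ) (by norm_num : (2 : ℝ)⁻¹ < 1)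
      refine ⟨m, ?_⟩
      have h1 : (2 : ℝ)⁻¹ ^ (m + 1) ≤ 2⁻¹ ^ m :=
        pow_le_pow_of_le_one (by norm_num) (by norm_num) (Nat.le_succ m)
      calc ρ * 2⁻¹ ^ (m + 1) ≤ ρ * 2⁻¹ ^ m := by
            exact mul_le_mul_of_nonneg_left h1 hρ.le
        _ < ρ * (dist y c / ρ) := by exact mul_lt_mul_of_pos_left hm hρ
        _ = dist y c := by field_simp
    refine Set.mem_union_right _ (Set.mem_iUnion.2 ⟨Nat.find hP, ?_, ?_⟩)
    · -- y ∈ closedBall c (ρ * 2⁻¹ ^ Nat.find hP)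
      rcases Nat.eq_zero_or_pos (Nat.find hP) with h0 | hpos
      · rw [h0]; simpa using hy
      · have := Nat.find_min hP (Nat.sub_lt hpos one_pos)
        push_neg at this
        rw [mem_closedBall]
        calc dist y c ≤ ρ * 2⁻¹ ^ (Nat.find hP - 1 + 1) := this
          _ = ρ * 2⁻¹ ^ Nat.find hP := by rw [Nat.sub_add_cancel hpos]
    · intro hmem
      exact absurd (mem_closedBall.1 hmem) (not_le.2 (Nat.find_spec hP))
  have hzero : ∫⁻ y in ({c} : Set E3), ENNReal.ofReal ((dist c y)⁻¹) ^ 2 ∂volume = 0 :=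
    setLIntegral_measure_zero _ _ (measure_singleton c)
  have hAn : ∀ n : ℕ, ∫⁻ y in A n, ENNReal.ofReal ((dist c y)⁻¹) ^ 2 ∂volume ≤
      ENNReal.ofReal (4 * ρ * 2⁻¹ ^ n) * V := by
    intro n
    have hrn : (0 : ℝ) < ρ * 2⁻¹ ^ (n + 1) := by positivity
    have hbound : ∀ y ∈ A n, ENNReal.ofReal ((dist c y)⁻¹) ^ 2 ≤
        ENNReal.ofReal ((ρ * 2⁻¹ ^ (n + 1))⁻¹) ^ 2 := by
      intro y hy
      have h2 : ρ * 2⁻¹ ^ (n + 1) < dist y c :=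
        lt_of_not_ge fun h => hy.2 (mem_closedBall.2 h)
      have h2' : ρ * 2⁻¹ ^ (n + 1) < dist c y := by rwa [dist_comm]
      have h3 : (dist c y)⁻¹ ≤ (ρ * 2⁻¹ ^ (n + 1))⁻¹ := inv_anti₀ hrn h2'.le
      gcongr
    calc ∫⁻ y in A n, ENNReal.ofReal ((dist c y)⁻¹) ^ 2 ∂volume
        ≤ ∫⁻ _ in A n, ENNReal.ofReal ((ρ * 2⁻¹ ^ (n + 1))⁻¹) ^ 2 ∂volume :=
          setLIntegral_mono measurable_const hbound
      _ = ENNReal.ofReal ((ρ * 2⁻¹ ^ (n + 1))⁻¹) ^ 2 * volume (A n) := setLIntegral_const _ _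
      _ ≤ ENNReal.ofReal ((ρ * 2⁻¹ ^ (n + 1))⁻¹) ^ 2 * volume (closedBall c (ρ * 2⁻¹ ^ n)) := by
          gcongr
          exact Set.diff_subset
      _ = ENNReal.ofReal ((ρ * 2⁻¹ ^ (n + 1))⁻¹) ^ 2 *
            (ENNReal.ofReal ((ρ * 2⁻¹ ^ n) ^ (3 : ℕ)) * V) := by
          rw [Measure.addHaar_closedBall volume c (by positivity)]
          rw [finrank_euclideanSpace, Fintype.card_fin,
            ENNReal.ofReal_pow (by positivity : (0:ℝ) ≤ ρ * 2⁻¹ ^ n)]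
      _ = ENNReal.ofReal (4 * ρ * 2⁻¹ ^ n) * V := by
          rw [← ENNReal.ofReal_pow (by positivity), ← mul_assoc,
            ← ENNReal.ofReal_mul (by positivity)]
          congr 1
          congr 1
          have ht : (0:ℝ) < (2:ℝ)⁻¹ ^ n := by positivity
          field_simp
          ring
  calc ∫⁻ y in closedBall c ρ, ENNReal.ofReal ((dist c y)⁻¹) ^ 2 ∂volume
      ≤ ∫⁻ y in ({c} ∪ ⋃ n, A n), ENNReal.ofReal ((dist c y)⁻¹) ^ 2 ∂volume :=
        lintegral_mono_set hcover
    _ ≤ (∫⁻ y in ({c} : Set E3), ENNReal.ofReal ((dist c y)⁻¹) ^ 2 ∂volume) +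
          ∫⁻ y in (⋃ n, A n), ENNReal.ofReal ((dist c y)⁻¹) ^ 2 ∂volume :=
        lintegral_union_le _ _ _
    _ = ∫⁻ y in (⋃ n, A n), ENNReal.ofReal ((dist c y)⁻¹) ^ 2 ∂volume := by
        rw [hzero, zero_add]
    _ ≤ ∑' n, ∫⁻ y in A n, ENNReal.ofReal ((dist c y)⁻¹) ^ 2 ∂volume :=
        lintegral_iUnion_le _ _
    _ ≤ ∑' n, ENNReal.ofReal (4 * ρ * 2⁻¹ ^ n) * V := ENNReal.tsum_le_tsum hAn
    _ = ∑' n : ℕ, ENNReal.ofReal (4 * ρ) * ((2 : ℝ≥0∞)⁻¹ ^ n * V) := by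
        congr 1
        funext n
        rw [show (4:ℝ) * ρ * 2⁻¹ ^ n = (4 * ρ) * 2⁻¹ ^ n by ring,
          ENNReal.ofReal_mul (by positivity), ENNReal.ofReal_pow (by norm_num),
          ENNReal.ofReal_inv_of_pos (by norm_num), ENNReal.ofReal_ofNat, mul_assoc]
    _ = ENNReal.ofReal (4 * ρ) * ((∑' n : ℕ, (2 : ℝ≥0∞)⁻¹ ^ n) * V) := by
        rw [ENNReal.tsum_mul_left, ENNReal.tsum_mul_right]
    _ = ENNReal.ofReal (8 * ρ) * V := by
        rw [ENNReal.tsum_geometric, ENNReal.one_sub_inv_two, inv_inv, ← mul_assoc,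
          show ((2:ℝ≥0∞)) = ENNReal.ofReal 2 by simp, mul_comm (ENNReal.ofReal (4*ρ)),
          ← ENNReal.ofReal_mul (by norm_num)]
        ring_nf


lemma mul_le_sq_add (a b : ℝ≥0∞) : a * b ≤ a ^ 2 + b ^ 2 := by
  rcases le_total a b with h | h
  · calc a * b ≤ b * b := by gcongr
      _ = b ^ 2 := (sq b).symm
      _ ≤ a ^ 2 + b ^ 2 := le_add_self
  · calc a * b ≤ a * a := by gcongr
      _ = a ^ 2 := (sq a).symm
      _ ≤ a ^ 2 + b ^ 2 := le_self_add

/-- For a compact set `M ⊆ ℝ³` with the Euclidean distance `r = dist`,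
there is `C > 0` with `∫_M 1/(r(x,y) r(y,z)) dy ≤ C / r(x,z)` for all `x ≠ z` in `M`. -/
theorem stmt_3 (M : Set (EuclideanSpace ℝ (Fin 3))) (hM : IsCompact M) :
    ∃ C > 0, ∀ x ∈ M, ∀ z ∈ M, x ≠ z →
      (∫ y in M, (dist x y)⁻¹ * (dist y z)⁻¹) ≤ C / dist x z := by
  obtain ⟨R0, hR0⟩ := hM.isBounded.subset_closedBall 0
  set R : ℝ := max R0 1 with hRdef
  have hR1 : (0:ℝ) < R := lt_of_lt_of_le one_pos (le_max_right _ _)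
  have hMR : M ⊆ closedBall 0 R := hR0.trans (closedBall_subset_closedBall (le_max_left _ _))
  set V := volume (ball (0 : E3) 1) with hVdef
  have hVtop : V ≠ ⊤ := measure_ball_lt_top.ne
  set Kinf : ℝ≥0∞ := 2 * (ENNReal.ofReal (8 * (2 * R)) * V) with hKinf
  have hKtop : Kinf ≠ ⊤ := by
    rw [hKinf]
    exact ENNReal.mul_ne_top (by norm_num) (ENNReal.mul_ne_top ENNReal.ofReal_ne_top hVtop)
  set K : ℝ := Kinf.toReal with hKdef
  have hK0 : 0 ≤ K := ENNReal.toReal_nonneg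
  refine ⟨K * (2 * R) + 1, by positivity, ?_⟩
  intro x hx z hz hxz
  have hrpos : 0 < dist x z := dist_pos.2 hxz
  have hx0 : dist x 0 ≤ R := mem_closedBall.1 (hMR hx)
  have hz0 : dist z 0 ≤ R := mem_closedBall.1 (hMR hz)
  have hrle : dist x z ≤ 2 * R := by
    calc dist x z ≤ dist x 0 + dist 0 z := dist_triangle _ _ _
      _ = dist x 0 + dist z 0 := by rw [dist_comm (0 : E3) z]
      _ ≤ 2 * R := by linarith
  have hmx : Measurable fun y : E3 => (dist x y)⁻¹ :=
    ((continuous_const.dist continuous_id).measurable).inv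
  have hmz : Measurable fun y : E3 => (dist y z)⁻¹ :=
    ((continuous_id.dist continuous_const).measurable).inv
  have hnn : 0 ≤ᵐ[volume.restrict M] fun y => (dist x y)⁻¹ * (dist y z)⁻¹ :=
    Filter.Eventually.of_forall fun y => by positivity
  rw [MeasureTheory.integral_eq_lintegral_of_nonneg_ae hnn
    ((hmx.mul hmz).aestronglyMeasurable)]
  have hsub1 : M ⊆ closedBall x (2 * R) := by
    intro y hy
    have hy0 : dist y 0 ≤ R := mem_closedBall.1 (hMR hy)
    rw [mem_closedBall]
    calc dist y x ≤ dist y 0 + dist 0 x := dist_triangle _ _ _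
      _ = dist y 0 + dist x 0 := by rw [dist_comm (0 : E3) x]
      _ ≤ 2 * R := by linarith
  have hsub2 : M ⊆ closedBall z (2 * R) := by
    intro y hy
    have hy0 : dist y 0 ≤ R := mem_closedBall.1 (hMR hy)
    rw [mem_closedBall]
    calc dist y z ≤ dist y 0 + dist 0 z := dist_triangle _ _ _
      _ = dist y 0 + dist z 0 := by rw [dist_comm (0 : E3) z]
      _ ≤ 2 * R := by linarith
  have hL : (∫⁻ y in M, ENNReal.ofReal ((dist x y)⁻¹ * (dist y z)⁻¹) ∂volume) ≤ Kinf := by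
    have hpt : ∀ y : E3, ENNReal.ofReal ((dist x y)⁻¹ * (dist y z)⁻¹) ≤
        ENNReal.ofReal ((dist x y)⁻¹) ^ 2 + ENNReal.ofReal ((dist y z)⁻¹) ^ 2 := by
      intro y
      rw [ENNReal.ofReal_mul (by positivity)]
      exact mul_le_sq_add _ _
    calc (∫⁻ y in M, ENNReal.ofReal ((dist x y)⁻¹ * (dist y z)⁻¹) ∂volume)
        ≤ ∫⁻ y in M, (ENNReal.ofReal ((dist x y)⁻¹) ^ 2 +
            ENNReal.ofReal ((dist y z)⁻¹) ^ 2) ∂volume := lintegral_mono fun y => hpt y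
      _ = (∫⁻ y in M, ENNReal.ofReal ((dist x y)⁻¹) ^ 2 ∂volume) +
            ∫⁻ y in M, ENNReal.ofReal ((dist y z)⁻¹) ^ 2 ∂volume :=
          lintegral_add_left (hmx.ennreal_ofReal.pow_const 2) _
      _ ≤ (ENNReal.ofReal (8 * (2 * R)) * V) + (ENNReal.ofReal (8 * (2 * R)) * V) := by
          gcongr
          · calc (∫⁻ y in M, ENNReal.ofReal ((dist x y)⁻¹) ^ 2 ∂volume)
                ≤ ∫⁻ y in closedBall x (2 * R), ENNReal.ofReal ((dist x y)⁻¹) ^ 2 ∂volume :=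
                  lintegral_mono_set hsub1
              _ ≤ _ := key_lintegral x (by positivity)
          · have heq : (fun y : E3 => ENNReal.ofReal ((dist y z)⁻¹) ^ 2) =
                fun y : E3 => ENNReal.ofReal ((dist z y)⁻¹) ^ 2 := by
              funext y; rw [dist_comm]
            calc (∫⁻ y in M, ENNReal.ofReal ((dist y z)⁻¹) ^ 2 ∂volume)
                = ∫⁻ y in M, ENNReal.ofReal ((dist z y)⁻¹) ^ 2 ∂volume := by rw [heq]
              _ ≤ ∫⁻ y in closedBall z (2 * R), ENNReal.ofReal ((dist z y)⁻¹) ^ 2 ∂volume :=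
                  lintegral_mono_set hsub2
              _ ≤ _ := key_lintegral z (by positivity)
      _ = Kinf := (two_mul _).symm
  calc (∫⁻ y in M, ENNReal.ofReal ((dist x y)⁻¹ * (dist y z)⁻¹) ∂volume).toReal
      ≤ K := ENNReal.toReal_mono hKtop hL
    _ ≤ (K * (2 * R) + 1) / dist x z := by
        rw [le_div_iff₀ hrpos]
        nlinarith
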